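/- Let F0^n, F0 and P^n, P be probability measures on R+ with P({0}) < 1, and suppose F0^n → F0 and P^n → P weakly. Define the renewal measures A^n = F0^n * Σ_{i≥0} (P^n)^{*(i)} and A = F0 * Σ_{i≥0} P^{*(i)}. Then for every q > 0 the Laplace transforms converge: Â^n(q) = F̂0^n(q)/(1 − P̂^n(q)) → F̂0(q)/(1 − P̂(q)) = Â(q); consequently the cumulative functions A^n([0,τ]) converge to A([0,τ]) at every continuity point τ of A([0,·]). -/

import Mathlib

open MeasureTheory Set Filter Topology

/-- Convolution of two measures on `ℝ`:
`(μ*ν)(E) = ∫∫ 1_E(x+y) μ(dx) ν(dy)`. -/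
noncomputable def measConv (μ ν : MeasureTheory.Measure ℝ) : MeasureTheory.Measure ℝ :=
  MeasureTheory.Measure.map (fun z : ℝ × ℝ => z.1 + z.2) (μ.prod ν)

/-- Weak convergence of a sequence of measures: convergence of integrals of all
bounded continuous functions. -/
def WeakTendsto (μs : ℕ → MeasureTheory.Measure ℝ) (μ : MeasureTheory.Measure ℝ) : Prop :=
  ∀ f : BoundedContinuousFunction ℝ ℝ,
    Filter.Tendsto (fun n => ∫ x, f x ∂(μs n)) Filter.atTop (nhds (∫ x, f x ∂μ))

/-- `i`-fold self-convolution `P^{*(i)}`, with `P^{*(0)} = δ₀`. -/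
noncomputable def measIter (P : MeasureTheory.Measure ℝ) : ℕ → MeasureTheory.Measure ℝ
  | 0 => MeasureTheory.Measure.dirac 0
  | (i + 1) => measConv (measIter P i) P

/-- The renewal measure `A = F0 * Σ_{i≥0} P^{*(i)}`. -/
noncomputable def renewalMeasure (F0 P : MeasureTheory.Measure ℝ) : MeasureTheory.Measure ℝ :=
  measConv F0 (MeasureTheory.Measure.sum (fun i : ℕ => measIter P i))

/-- The Laplace transform `μ̂(q) = ∫_0^∞ e^{-qx} μ(dx)` of a measure on `ℝ₊`. -/
noncomputable def mLaplace (μ : MeasureTheory.Measure ℝ) (q : ℝ) : ℝ :=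
  ∫ x, Real.exp (-q * x) ∂μ

/-- Cumulative function `τ ↦ μ([0,τ])` of a measure on `ℝ₊`. -/
noncomputable def cumul (μ : MeasureTheory.Measure ℝ) (τ : ℝ) : ℝ :=
  (μ (Set.Icc 0 τ)).toReal

/-- Generalized inverse `f†(t) = inf{s ≥ 0 : f(s) > t}` of a nondecreasing
function `f : ℝ₊ → ℝ₊`. -/
noncomputable def genInv (f : ℝ → ℝ) (t : ℝ) : ℝ :=
  sInf {s : ℝ | 0 ≤ s ∧ t < f s}

/-!
Laplace transforms turn convolution into multiplication, so `Â(q) = F̂0(q) Σᵢ P̂(q)^i` is a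
geometric series; the transforms of `F0^n, P^n` converge because `x ↦ exp (-q * max x 0)` is
bounded and continuous.

For the cumulative functions, write `A = Σᵢ F0 * P^{*i}`. Convolution of probability measures is
weakly continuous (it is the push-forward of the product measure under addition), so every
summand converges weakly. A continuity point `τ` of `A([0,·])` is not an atom of any summand,
and the portmanteau theorem gives convergence of the summands on `(-∞, τ]`. Finally the Chernoff
bound `μ((-∞, τ]) ≤ e^τ μ̂(1)` dominates the `i`-th summand by `e^τ r^i` for any `P̂(1) < r < 1`,
eventually in `n`, and dominated convergence for series concludes.
-/

open scoped ENNReal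

instance isProbabilityMeasure_measConv (μ ν : Measure ℝ) [IsProbabilityMeasure μ]
    [IsProbabilityMeasure ν] : IsProbabilityMeasure (measConv μ ν) :=
  Measure.isProbabilityMeasure_map measurable_add.aemeasurable

instance isProbabilityMeasure_measIter (P : Measure ℝ) [IsProbabilityMeasure P] (i : ℕ) :
    IsProbabilityMeasure (measIter P i) := by
  induction i with
  | zero => rw [measIter]; infer_instance
  | succ i ih => rw [measIter]; infer_instance

lemma ae_nonneg_of_measure_Iio_eq_zero {μ : Measure ℝ} (hμ : μ (Iio 0) = 0) :
    ∀ᵐ x ∂μ, 0 ≤ x := by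
  rw [ae_iff]
  simp only [not_le]
  exact hμ

lemma measure_Icc_zero_eq_measure_Iic {μ : Measure ℝ} (hμ : μ (Iio 0) = 0) (τ : ℝ) :
    μ (Icc 0 τ) = μ (Iic τ) := by
  have : Iic τ \ Iio 0 = Icc 0 τ := by ext x; simp [and_comm]
  rw [← this, measure_sdiff_null hμ]

lemma measConv_Iio_eq_zero {μ ν : Measure ℝ} [SFinite ν] (hμ : μ (Iio 0) = 0)
    (hν : ν (Iio 0) = 0) : measConv μ ν (Iio 0) = 0 := by
  have hsub : (fun z : ℝ × ℝ => z.1 + z.2) ⁻¹' Iio 0 ⊆ Iio 0 ×ˢ univ ∪ univ ×ˢ Iio 0 := by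
    rintro ⟨x, y⟩ (hxy : x + y < 0)
    by_contra! h
    simp only [mem_union, mem_prod, mem_Iio, mem_univ, and_true, true_and, not_or, not_lt] at h
    linarith
  rw [measConv, Measure.map_apply measurable_add measurableSet_Iio]
  exact measure_mono_null hsub <| measure_union_null (by simp [hμ]) (by simp [hν])

lemma measIter_Iio_eq_zero {P : Measure ℝ} [SFinite P] (hP : P (Iio 0) = 0) (i : ℕ) :
    measIter P i (Iio 0) = 0 := by
  induction i with
  | zero => simp [measIter]
  | succ i ih => exact measConv_Iio_eq_zero ih hP

-- Kept in `ℝ≥0∞`, where `Â = F̂0 * (1 - P̂)⁻¹` holds with no side conditions.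
noncomputable def eLaplace (μ : Measure ℝ) (q : ℝ) : ℝ≥0∞ :=
  ∫⁻ x, ENNReal.ofReal (Real.exp (-q * x)) ∂μ

lemma measurable_ofReal_exp_neg_mul (q : ℝ) :
    Measurable fun x : ℝ => ENNReal.ofReal (Real.exp (-q * x)) := by
  fun_prop

lemma mLaplace_eq_toReal_eLaplace (μ : Measure ℝ) (q : ℝ) :
    mLaplace μ q = (eLaplace μ q).toReal :=
  integral_eq_lintegral_of_nonneg_ae (.of_forall fun _ => (Real.exp_pos _).le) (by fun_prop)

lemma eLaplace_measConv (μ ν : Measure ℝ) [SFinite μ] [SFinite ν] (q : ℝ) :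
    eLaplace (measConv μ ν) q = eLaplace μ q * eLaplace ν q := by
  have hexp : ∀ z : ℝ × ℝ, ENNReal.ofReal (Real.exp (-q * (z.1 + z.2)))
      = ENNReal.ofReal (Real.exp (-q * z.1)) * ENNReal.ofReal (Real.exp (-q * z.2)) := fun z => by
    rw [← ENNReal.ofReal_mul (Real.exp_pos _).le, ← Real.exp_add, mul_add]
  rw [eLaplace, measConv, lintegral_map (measurable_ofReal_exp_neg_mul q) measurable_add]
  simp_rw [hexp]
  exact lintegral_prod_mul (measurable_ofReal_exp_neg_mul q).aemeasurable
    (measurable_ofReal_exp_neg_mul q).aemeasurable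

lemma eLaplace_measIter (P : Measure ℝ) [IsProbabilityMeasure P] (q : ℝ) (i : ℕ) :
    eLaplace (measIter P i) q = eLaplace P q ^ i := by
  induction i with
  | zero => simp [measIter, eLaplace]
  | succ i ih => rw [measIter, eLaplace_measConv, ih, pow_succ]

lemma eLaplace_sum (m : ℕ → Measure ℝ) (q : ℝ) :
    eLaplace (Measure.sum m) q = ∑' i, eLaplace (m i) q :=
  lintegral_sum_measure _ _

lemma eLaplace_renewalMeasure (F0 P : Measure ℝ) [SFinite F0] [IsProbabilityMeasure P] (q : ℝ) :
    eLaplace (renewalMeasure F0 P) q = eLaplace F0 q * (1 - eLaplace P q)⁻¹ := by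
  simp_rw [renewalMeasure, eLaplace_measConv, eLaplace_sum, eLaplace_measIter,
    ENNReal.tsum_geometric]

lemma eLaplace_le_one {μ : Measure ℝ} [IsProbabilityMeasure μ] (hμ : μ (Iio 0) = 0) {q : ℝ}
    (hq : 0 ≤ q) : eLaplace μ q ≤ 1 := by
  calc eLaplace μ q ≤ ∫⁻ _, 1 ∂μ := by
        refine lintegral_mono_ae ?_
        filter_upwards [ae_nonneg_of_measure_Iio_eq_zero hμ] with x hx
        simpa using mul_nonneg hq hx
    _ = 1 := by simp

lemma eLaplace_ne_top {μ : Measure ℝ} [IsProbabilityMeasure μ] (hμ : μ (Iio 0) = 0) {q : ℝ}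
    (hq : 0 ≤ q) : eLaplace μ q ≠ ∞ :=
  ne_top_of_le_ne_top ENNReal.one_ne_top (eLaplace_le_one hμ hq)

lemma eLaplace_lt_one {P : Measure ℝ} [IsProbabilityMeasure P] (hP : P (Iio 0) = 0)
    (hP0 : P {0} < 1) {q : ℝ} (hq : 0 < q) : eLaplace P q < 1 := by
  have hne : ∃ᵐ x ∂P, ENNReal.ofReal (Real.exp (-q * x)) ≠ 1 := by
    have hx0 : ∃ᵐ x ∂P, x ≠ 0 := by
      rw [frequently_ae_iff, ← compl_singleton_eq (0 : ℝ),
        prob_compl_eq_one_sub (measurableSet_singleton 0)]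
      exact (tsub_pos_of_lt hP0).ne'
    refine hx0.mono fun x hx h => hx ?_
    rw [ENNReal.ofReal_eq_one, Real.exp_eq_one_iff] at h
    simpa [hq.ne'] using h
  calc eLaplace P q < ∫⁻ _, 1 ∂P := by
        refine lintegral_strict_mono_of_ae_le_of_frequently_ae_lt aemeasurable_const
          (eLaplace_ne_top hP hq.le) ?_ hne
        filter_upwards [ae_nonneg_of_measure_Iio_eq_zero hP] with x hx
        simpa using mul_nonneg hq.le hx
    _ = 1 := by simp

-- If `P̂(q) = 1` both sides are junk zeros: `∞.toReal = 0` and `x / 0 = 0`.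
lemma mLaplace_renewalMeasure (F0 P : Measure ℝ) [SFinite F0] [IsProbabilityMeasure P]
    (hP : P (Iio 0) = 0) {q : ℝ} (hq : 0 ≤ q) :
    mLaplace (renewalMeasure F0 P) q = mLaplace F0 q / (1 - mLaplace P q) := by
  simp only [mLaplace_eq_toReal_eLaplace, eLaplace_renewalMeasure, ENNReal.toReal_mul,
    ENNReal.toReal_inv, ENNReal.toReal_sub_of_le (eLaplace_le_one hP hq) ENNReal.one_ne_top,
    ENNReal.toReal_one, div_eq_mul_inv]

lemma mLaplace_nonneg (μ : Measure ℝ) (q : ℝ) : 0 ≤ mLaplace μ q :=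
  integral_nonneg fun _ => (Real.exp_pos _).le

lemma mLaplace_lt_one {P : Measure ℝ} [IsProbabilityMeasure P] (hP : P (Iio 0) = 0)
    (hP0 : P {0} < 1) {q : ℝ} (hq : 0 < q) : mLaplace P q < 1 := by
  rw [mLaplace_eq_toReal_eLaplace]
  exact ENNReal.toReal_lt_of_lt_ofReal (by simpa using eLaplace_lt_one hP hP0 hq)

-- Agrees with `x ↦ exp (-q * x)` on `[0, ∞)` but is bounded on all of `ℝ`.
noncomputable def expNegMulMaxZero (q : ℝ) (hq : 0 ≤ q) : BoundedContinuousFunction ℝ ℝ :=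
  .ofNormedAddCommGroup (fun x => Real.exp (-q * max x 0)) (by fun_prop) 1 fun x => by
    rw [Real.norm_eq_abs, abs_of_pos (Real.exp_pos _), Real.exp_le_one_iff]
    nlinarith [le_max_right x 0]

lemma tendsto_mLaplace_of_weakTendsto {μs : ℕ → Measure ℝ} {μ : Measure ℝ}
    (hμs : ∀ n, μs n (Iio 0) = 0) (hμ : μ (Iio 0) = 0) (hconv : WeakTendsto μs μ) {q : ℝ}
    (hq : 0 ≤ q) : Tendsto (fun n => mLaplace (μs n) q) atTop (𝓝 (mLaplace μ q)) := by
  have hint : ∀ ν : Measure ℝ, ν (Iio 0) = 0 → ∫ x, expNegMulMaxZero q hq x ∂ν = mLaplace ν q :=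
    fun ν hν => integral_congr_ae <| by
      filter_upwards [ae_nonneg_of_measure_Iio_eq_zero hν] with x hx
      simp [expNegMulMaxZero, max_eq_left hx]
  simpa only [hint _ hμ, hint _ (hμs _)] using hconv (expNegMulMaxZero q hq)

lemma tendsto_mLaplace_renewalMeasure {F0s Ps : ℕ → Measure ℝ} {F0 P : Measure ℝ}
    [∀ n, SFinite (F0s n)] [∀ n, IsProbabilityMeasure (Ps n)] [SFinite F0]
    [IsProbabilityMeasure P]
    (hF0s : ∀ n, F0s n (Iio 0) = 0) (hPs : ∀ n, Ps n (Iio 0) = 0)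
    (hF0 : F0 (Iio 0) = 0) (hP : P (Iio 0) = 0) (hP0 : P {0} < 1)
    (hF0conv : WeakTendsto F0s F0) (hPconv : WeakTendsto Ps P) {q : ℝ} (hq : 0 < q) :
    Tendsto (fun n => mLaplace (renewalMeasure (F0s n) (Ps n)) q) atTop
      (𝓝 (mLaplace (renewalMeasure F0 P) q)) := by
  simp only [mLaplace_renewalMeasure _ _ (hPs _) hq.le, mLaplace_renewalMeasure _ _ hP hq.le]
  exact (tendsto_mLaplace_of_weakTendsto hF0s hF0 hF0conv hq.le).div
    (tendsto_const_nhds.sub (tendsto_mLaplace_of_weakTendsto hPs hP hPconv hq.le))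
    (sub_pos.mpr (mLaplace_lt_one hP hP0 hq)).ne'

def MeasureTheory.Measure.toProbabilityMeasure (μ : Measure ℝ) [IsProbabilityMeasure μ] :
    ProbabilityMeasure ℝ :=
  ⟨μ, ‹_›⟩

noncomputable def MeasureTheory.ProbabilityMeasure.measConv (μ ν : ProbabilityMeasure ℝ) :
    ProbabilityMeasure ℝ :=
  (μ.prod ν).map continuous_add.measurable.aemeasurable

lemma MeasureTheory.ProbabilityMeasure.continuous_measConv :
    Continuous fun p : ProbabilityMeasure ℝ × ProbabilityMeasure ℝ => p.1.measConv p.2 :=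
  (ProbabilityMeasure.continuous_map continuous_add).comp ProbabilityMeasure.continuous_prod

lemma tendsto_toProbabilityMeasure_of_weakTendsto {μs : ℕ → Measure ℝ} {μ : Measure ℝ}
    [∀ n, IsProbabilityMeasure (μs n)] [IsProbabilityMeasure μ] (hconv : WeakTendsto μs μ) :
    Tendsto (fun n => (μs n).toProbabilityMeasure) atTop (𝓝 μ.toProbabilityMeasure) :=
  ProbabilityMeasure.tendsto_iff_forall_integral_tendsto.mpr hconv

lemma tendsto_measConv_toProbabilityMeasure {μs νs : ℕ → Measure ℝ} {μ ν : Measure ℝ}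
    [∀ n, IsProbabilityMeasure (μs n)] [∀ n, IsProbabilityMeasure (νs n)]
    [IsProbabilityMeasure μ] [IsProbabilityMeasure ν]
    (hμ : Tendsto (fun n => (μs n).toProbabilityMeasure) atTop (𝓝 μ.toProbabilityMeasure))
    (hν : Tendsto (fun n => (νs n).toProbabilityMeasure) atTop (𝓝 ν.toProbabilityMeasure)) :
    Tendsto (fun n => (measConv (μs n) (νs n)).toProbabilityMeasure) atTop
      (𝓝 (measConv μ ν).toProbabilityMeasure) :=
  (ProbabilityMeasure.continuous_measConv.tendsto _).comp (hμ.prodMk_nhds hν)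

lemma tendsto_measIter_toProbabilityMeasure {Ps : ℕ → Measure ℝ} {P : Measure ℝ}
    [∀ n, IsProbabilityMeasure (Ps n)] [IsProbabilityMeasure P]
    (hP : Tendsto (fun n => (Ps n).toProbabilityMeasure) atTop (𝓝 P.toProbabilityMeasure))
    (i : ℕ) :
    Tendsto (fun n => (measIter (Ps n) i).toProbabilityMeasure) atTop
      (𝓝 (measIter P i).toProbabilityMeasure) := by
  induction i with
  | zero => exact tendsto_const_nhds
  | succ i ih => exact tendsto_measConv_toProbabilityMeasure ih hP

lemma renewalMeasure_eq_sum (F0 P : Measure ℝ) [IsProbabilityMeasure P] :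
    renewalMeasure F0 P = Measure.sum fun i => measConv F0 (measIter P i) := by
  rw [renewalMeasure, measConv, Measure.prod_sum_right, Measure.map_sum measurable_add.aemeasurable]
  rfl

lemma measure_Iic_le_exp_mul_eLaplace (μ : Measure ℝ) {q : ℝ} (hq : 0 ≤ q) (τ : ℝ) :
    μ (Iic τ) ≤ ENNReal.ofReal (Real.exp (q * τ)) * eLaplace μ q := by
  have hexp : ∀ x ∈ Iic τ,
      1 ≤ ENNReal.ofReal (Real.exp (q * τ)) * ENNReal.ofReal (Real.exp (-q * x)) := by
    intro x (hx : x ≤ τ)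
    rw [← ENNReal.ofReal_mul (Real.exp_pos _).le, ← Real.exp_add, ENNReal.one_le_ofReal,
      Real.one_le_exp_iff]
    nlinarith
  calc μ (Iic τ) = ∫⁻ _ in Iic τ, 1 ∂μ := (setLIntegral_one _).symm
    _ ≤ ∫⁻ x in Iic τ, ENNReal.ofReal (Real.exp (q * τ)) * ENNReal.ofReal (Real.exp (-q * x)) ∂μ :=
      setLIntegral_mono (by fun_prop) hexp
    _ ≤ ∫⁻ x, ENNReal.ofReal (Real.exp (q * τ)) * ENNReal.ofReal (Real.exp (-q * x)) ∂μ :=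
      setLIntegral_le_lintegral _ _
    _ = ENNReal.ofReal (Real.exp (q * τ)) * eLaplace μ q :=
      lintegral_const_mul _ (measurable_ofReal_exp_neg_mul q)

lemma renewalMeasure_Icc_ne_top {F0 P : Measure ℝ} [IsProbabilityMeasure F0]
    [IsProbabilityMeasure P] (hF0 : F0 (Iio 0) = 0) (hP : P (Iio 0) = 0) (hP0 : P {0} < 1)
    (τ : ℝ) : renewalMeasure F0 P (Icc 0 τ) ≠ ∞ := by
  have hlap : eLaplace (renewalMeasure F0 P) 1 ≠ ∞ := by
    rw [eLaplace_renewalMeasure]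
    refine ENNReal.mul_ne_top (eLaplace_ne_top hF0 zero_le_one) ?_
    exact ENNReal.inv_ne_top.mpr (tsub_pos_of_lt (eLaplace_lt_one hP hP0 one_pos)).ne'
  refine ne_top_of_le_ne_top ?_ ((measure_mono Icc_subset_Iic_self).trans
    (measure_Iic_le_exp_mul_eLaplace _ zero_le_one τ))
  exact ENNReal.mul_ne_top ENNReal.ofReal_ne_top hlap

lemma measure_singleton_eq_zero_of_continuousAt_cumul {μ : Measure ℝ} {τ : ℝ} (hτ : 0 ≤ τ)
    (hfin : μ (Icc 0 τ) ≠ ∞) (hc : ContinuousAt (cumul μ) τ) : μ {τ} = 0 := by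
  have hτfin : μ {τ} ≠ ∞ := ne_top_of_le_ne_top hfin (measure_mono (by simp [hτ]))
  have hjump : ∀ s < τ, cumul μ s + (μ {τ}).toReal ≤ cumul μ τ := fun s hs => by
    have hIcc : Icc 0 s ⊆ Icc 0 τ := Icc_subset_Icc_right hs.le
    have hdisj : Disjoint (Icc 0 s) {τ} := disjoint_singleton_right.mpr fun h => hs.not_ge h.2
    rw [cumul, cumul, ← ENNReal.toReal_add (ne_top_of_le_ne_top hfin (measure_mono hIcc)) hτfin,
      ← measure_union hdisj (measurableSet_singleton τ)]
    exact ENNReal.toReal_mono hfin (measure_mono (union_subset hIcc (by simp [hτ])))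
  have hle : cumul μ τ + (μ {τ}).toReal ≤ cumul μ τ :=
    le_of_tendsto ((hc.tendsto.mono_left (nhdsWithin_le_nhds (s := Iio τ))).add_const _)
      (eventually_nhdsWithin_of_forall hjump)
  exact (ENNReal.toReal_eq_zero_iff _).mp (le_antisymm (by linarith) ENNReal.toReal_nonneg)
    |>.resolve_right hτfin

lemma cumul_renewalMeasure_eq_tsum (F0 P : Measure ℝ) [IsProbabilityMeasure F0]
    [IsProbabilityMeasure P] (hF0 : F0 (Iio 0) = 0) (hP : P (Iio 0) = 0) (τ : ℝ) :
    cumul (renewalMeasure F0 P) τ = ∑' i, (measConv F0 (measIter P i) (Iic τ)).toReal := by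
  rw [cumul, renewalMeasure_eq_sum, Measure.sum_apply _ measurableSet_Icc,
    ENNReal.tsum_toReal_eq fun i => measure_ne_top _ _]
  simp_rw [measure_Icc_zero_eq_measure_Iic (measConv_Iio_eq_zero hF0 (measIter_Iio_eq_zero hP _))]

lemma toReal_measConv_measIter_Iic_le (F0 P : Measure ℝ) [IsProbabilityMeasure F0]
    [IsProbabilityMeasure P] (hF0 : F0 (Iio 0) = 0) (hP : P (Iio 0) = 0) (τ : ℝ) (i : ℕ) :
    (measConv F0 (measIter P i) (Iic τ)).toReal ≤ Real.exp τ * mLaplace P 1 ^ i := by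
  have hle := measure_Iic_le_exp_mul_eLaplace (measConv F0 (measIter P i)) zero_le_one τ
  rw [eLaplace_measConv, eLaplace_measIter, one_mul] at hle
  calc (measConv F0 (measIter P i) (Iic τ)).toReal
      ≤ (ENNReal.ofReal (Real.exp τ) * eLaplace P 1 ^ i).toReal := by
        refine ENNReal.toReal_mono (ENNReal.mul_ne_top ENNReal.ofReal_ne_top
          (ENNReal.pow_ne_top (eLaplace_ne_top hP zero_le_one))) (hle.trans ?_)
        gcongr
        exact mul_le_of_le_one_left zero_le (eLaplace_le_one hF0 zero_le_one)
    _ = Real.exp τ * mLaplace P 1 ^ i := by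
        rw [ENNReal.toReal_mul, ENNReal.toReal_pow, ENNReal.toReal_ofReal (Real.exp_pos τ).le,
          mLaplace_eq_toReal_eLaplace]

lemma tendsto_cumul_renewalMeasure {F0s Ps : ℕ → Measure ℝ} {F0 P : Measure ℝ}
    [∀ n, IsProbabilityMeasure (F0s n)] [∀ n, IsProbabilityMeasure (Ps n)]
    [IsProbabilityMeasure F0] [IsProbabilityMeasure P]
    (hF0s : ∀ n, F0s n (Iio 0) = 0) (hPs : ∀ n, Ps n (Iio 0) = 0)
    (hF0 : F0 (Iio 0) = 0) (hP : P (Iio 0) = 0) (hP0 : P {0} < 1)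
    (hF0conv : WeakTendsto F0s F0) (hPconv : WeakTendsto Ps P) {τ : ℝ} (hτ : 0 ≤ τ)
    (hc : ContinuousAt (cumul (renewalMeasure F0 P)) τ) :
    Tendsto (fun n => cumul (renewalMeasure (F0s n) (Ps n)) τ) atTop
      (𝓝 (cumul (renewalMeasure F0 P) τ)) := by
  have hatom : ∀ i, measConv F0 (measIter P i) {τ} = 0 := by
    have h := measure_singleton_eq_zero_of_continuousAt_cumul hτ
      (renewalMeasure_Icc_ne_top hF0 hP hP0 τ) hc
    rw [renewalMeasure_eq_sum, Measure.sum_apply _ (measurableSet_singleton τ)] at h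
    exact ENNReal.tsum_eq_zero.mp h
  have hsummand : ∀ i, Tendsto (fun n => (measConv (F0s n) (measIter (Ps n) i) (Iic τ)).toReal)
      atTop (𝓝 (measConv F0 (measIter P i) (Iic τ)).toReal) := fun i =>
    (ENNReal.tendsto_toReal (measure_ne_top _ _)).comp <|
      ProbabilityMeasure.tendsto_measure_of_null_frontier_of_tendsto'
        (tendsto_measConv_toProbabilityMeasure
          (tendsto_toProbabilityMeasure_of_weakTendsto hF0conv)
          (tendsto_measIter_toProbabilityMeasure
            (tendsto_toProbabilityMeasure_of_weakTendsto hPconv) i))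
        (by rw [frontier_Iic]; exact hatom i)
  obtain ⟨r, hPr, hr1⟩ := exists_between (mLaplace_lt_one hP hP0 one_pos)
  have hbound : ∀ᶠ n in atTop, ∀ i,
      ‖(measConv (F0s n) (measIter (Ps n) i) (Iic τ)).toReal‖ ≤ Real.exp τ * r ^ i := by
    filter_upwards [(tendsto_mLaplace_of_weakTendsto hPs hP hPconv zero_le_one).eventually
      (eventually_le_nhds hPr)] with n hn i
    rw [Real.norm_of_nonneg ENNReal.toReal_nonneg]
    refine (toReal_measConv_measIter_Iic_le _ _ (hF0s n) (hPs n) τ i).trans ?_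
    gcongr
    exact mLaplace_nonneg _ _
  simp only [cumul_renewalMeasure_eq_tsum _ _ (hF0s _) (hPs _),
    cumul_renewalMeasure_eq_tsum _ _ hF0 hP]
  exact tendsto_tsum_of_dominated_convergence ((summable_geometric_of_lt_one
    ((mLaplace_nonneg _ _).trans hPr.le) hr1).mul_left _) hsummand hbound

/-- If `F0^n → F0` and `P^n → P` weakly (probability measures
on `ℝ₊`, `P({0}) < 1`), then the Laplace transforms of the renewal measures
satisfy `Â^n(q) = F̂0^n(q)/(1 − P̂^n(q)) → F̂0(q)/(1 − P̂(q)) = Â(q)` for every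
`q > 0`; consequently `A^n([0,τ]) → A([0,τ])` at every continuity point `τ` of
`A([0,·])`. -/
theorem stmt11 (F0n Pn : ℕ → MeasureTheory.Measure ℝ) (F0 P : MeasureTheory.Measure ℝ)
    (hF0n : ∀ n, MeasureTheory.IsProbabilityMeasure (F0n n))
    (hPn : ∀ n, MeasureTheory.IsProbabilityMeasure (Pn n))
    (hF0 : MeasureTheory.IsProbabilityMeasure F0)
    (hP : MeasureTheory.IsProbabilityMeasure P)
    (hF0n_pos : ∀ n, F0n n (Set.Iio 0) = 0) (hPn_pos : ∀ n, Pn n (Set.Iio 0) = 0)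
    (hF0_pos : F0 (Set.Iio 0) = 0) (hP_pos : P (Set.Iio 0) = 0)
    (hP0 : P {0} < 1)
    (hF0conv : WeakTendsto F0n F0) (hPconv : WeakTendsto Pn P) :
    (∀ q : ℝ, 0 < q →
      (∀ n, mLaplace (renewalMeasure (F0n n) (Pn n)) q
          = mLaplace (F0n n) q / (1 - mLaplace (Pn n) q)) ∧
      mLaplace (renewalMeasure F0 P) q = mLaplace F0 q / (1 - mLaplace P q) ∧
      Filter.Tendsto (fun n => mLaplace (renewalMeasure (F0n n) (Pn n)) q)
        Filter.atTop (nhds (mLaplace (renewalMeasure F0 P) q))) ∧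
    (∀ τ : ℝ, 0 ≤ τ → ContinuousAt (cumul (renewalMeasure F0 P)) τ →
      Filter.Tendsto (fun n => cumul (renewalMeasure (F0n n) (Pn n)) τ)
        Filter.atTop (nhds (cumul (renewalMeasure F0 P) τ))) :=
  ⟨fun _ hq => ⟨fun n => mLaplace_renewalMeasure _ _ (hPn_pos n) hq.le,
      mLaplace_renewalMeasure _ _ hP_pos hq.le,
      tendsto_mLaplace_renewalMeasure hF0n_pos hPn_pos hF0_pos hP_pos hP0 hF0conv hPconv hq⟩,
    fun _ hτ hc => tendsto_cumul_renewalMeasure hF0n_pos hPn_pos hF0_pos hP_pos hP0 hF0conv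
      hPconv hτ hc⟩
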